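/- (Integral turnpike estimate for output stabilization underlying Theorem 4.2.) Assume: H ∈ C²(𝕏, ℝ), 𝕐 := H_x(𝕏) is open, H_x : 𝕏 → 𝕐 is a C¹-diffeomorphism; S(x) = eᵀx with e ∈ ℝⁿ \ {0}; ⋂_{k=1}^N (J_k e)^⊥ ∩ 𝕐 ≠ ∅. Let C ∈ ℝ^{p×n}, let y_ref be in the range of C, fix a compact set K ⊆ 𝕏, α₁, α₂, T₀ > 0, C₂ ≥ 0, and define the stage cost ℓ̃(x,u) = ‖Cx − y_ref‖² + (α₁ g(x)ᵀH_x(x) − α₂ T₀ g(x)ᵀS_x(x))ᵀ u. Then there exists C₃ ≥ 0, independent of t_f, such that for every t_f > 0 and every continuously differentiable solution x : [0,t_f] → 𝕏 of the RIPHS state equation with continuous control u satisfying x(t) ∈ K for all t and ∫₀^{t_f} ℓ̃(x(t),u(t)) dt ≤ C₂, one has ∫₀^{t_f} [ dist(x(t), C⁻¹{y_ref})² + dist(x(t), 𝒯)² ] dt ≤ C₃. -/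

import Mathlib

open Set Matrix Metric

/-- Matrix–vector multiplication on Euclidean space. -/
noncomputable def mv {a b : ℕ} (A : Matrix (Fin a) (Fin b) ℝ)
    (x : EuclideanSpace ℝ (Fin b)) : EuclideanSpace ℝ (Fin a) :=
  Matrix.toEuclideanLin A x

/-- The Poisson bracket `{S,H}_{J_k}(x) = eᵀ J_k H_x(x)` for the linear entropy `S(x) = eᵀx`. -/
noncomputable def brk {n : ℕ} (J : Matrix (Fin n) (Fin n) ℝ)
    (e Hx : EuclideanSpace ℝ (Fin n)) : ℝ :=
  inner ℝ e (mv J Hx)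

/-!
Along a solution, skew-symmetry of `J₀` and of the `J_k` makes `H` a storage function with
`dH/dt = ⟪gᵀH_x, u⟫`, while the Casimir property of `e` gives
`dS/dt = σ + ⟪gᵀe, u⟫` with entropy production `σ = Σ_k γ_k {S,H}_{J_k}² ≥ 0`.
Hence the integrated stage cost equals `∫ (‖Cx - y_ref‖² + α₂T₀σ)` plus the boundary values of
`α₁H - α₂T₀S`, which are bounded on `K`. Both squared distances are dominated on `K` by this
integrand: the distance to `C⁻¹{y_ref}` by `‖Cx - y_ref‖` (a linear error bound), the distance
to `𝒯` by `|({S,H}_{J_k}(x))_k|`, because `𝒯` is the preimage of a linear subspace under the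
diffeomorphism `H_x` (locally, project onto the subspace and pull back by the Lipschitz inverse;
globally, compactness), and `γ_k` is bounded below on `K`.
-/

open Filter Topology

section MatrixAction

variable {a b : ℕ}

@[simp] lemma mv_add (A B : Matrix (Fin a) (Fin b) ℝ) (x : EuclideanSpace ℝ (Fin b)) :
    mv (A + B) x = mv A x + mv B x := by
  simp [mv]

@[simp] lemma mv_neg (A : Matrix (Fin a) (Fin b) ℝ) (x : EuclideanSpace ℝ (Fin b)) :
    mv (-A) x = -mv A x := by
  simp [mv]

@[simp] lemma mv_smul (c : ℝ) (A : Matrix (Fin a) (Fin b) ℝ) (x : EuclideanSpace ℝ (Fin b)) :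
    mv (c • A) x = c • mv A x := by
  simp [mv]

@[simp] lemma mv_sum {ι : Type*} (s : Finset ι) (A : ι → Matrix (Fin a) (Fin b) ℝ)
    (x : EuclideanSpace ℝ (Fin b)) : mv (∑ i ∈ s, A i) x = ∑ i ∈ s, mv (A i) x := by
  simp [mv]

lemma inner_mv_right (A : Matrix (Fin a) (Fin b) ℝ) (y : EuclideanSpace ℝ (Fin a))
    (x : EuclideanSpace ℝ (Fin b)) : inner ℝ y (mv A x) = inner ℝ (mv Aᵀ y) x := by
  rw [mv, mv, ← conjTranspose_eq_transpose_of_trivial, toEuclideanLin_conjTranspose_eq_adjoint,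
    LinearMap.adjoint_inner_left]

lemma inner_mv_self_of_transpose_eq_neg {A : Matrix (Fin a) (Fin a) ℝ} (hA : Aᵀ = -A)
    (x : EuclideanSpace ℝ (Fin a)) : inner ℝ x (mv A x) = 0 := by
  have h := inner_mv_right A x x
  rw [hA, mv_neg, inner_neg_left, real_inner_comm] at h
  rw [real_inner_comm]
  linarith

lemma continuous_mv :
    Continuous fun Ax : Matrix (Fin a) (Fin b) ℝ × EuclideanSpace ℝ (Fin b) => mv Ax.1 Ax.2 := by
  simp only [mv, Matrix.toLpLin_apply]
  fun_prop

lemma ContinuousOn.mv {α : Type*} [TopologicalSpace α] {s : Set α}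
    {A : α → Matrix (Fin a) (Fin b) ℝ} {v : α → EuclideanSpace ℝ (Fin b)}
    (hA : ContinuousOn A s) (hv : ContinuousOn v s) :
    ContinuousOn (fun t => _root_.mv (A t) (v t)) s :=
  continuous_mv.comp_continuousOn (f := fun t => (A t, v t)) (hA.prodMk hv)

end MatrixAction

theorem LinearMap.exists_projection_ker {𝕜 E F : Type*} [NontriviallyNormedField 𝕜]
    [CompleteSpace 𝕜] [NormedAddCommGroup E] [NormedSpace 𝕜 E] [FiniteDimensional 𝕜 E]
    [NormedAddCommGroup F] [NormedSpace 𝕜 F] (A : E →ₗ[𝕜] F) :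
    ∃ (P : E →L[𝕜] E) (c : ℝ), 0 ≤ c ∧ (∀ x, A (P x) = 0) ∧ ∀ x, ‖x - P x‖ ≤ c * ‖A x‖ := by
  obtain ⟨σ, hσ⟩ := A.rangeRestrict.exists_rightInverse_of_surjective A.range_rangeRestrict
  have hAσ : ∀ x, A (σ (A.rangeRestrict x)) = A x := fun x => by
    simpa using congr_arg Subtype.val (LinearMap.congr_fun hσ (A.rangeRestrict x))
  refine ⟨LinearMap.toContinuousLinearMap (LinearMap.id - σ ∘ₗ A.rangeRestrict),
    ‖LinearMap.toContinuousLinearMap σ‖, norm_nonneg _, fun x => by simp [hAσ], fun x => ?_⟩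
  simpa using (LinearMap.toContinuousLinearMap σ).le_opNorm (A.rangeRestrict x)

lemma exists_infDist_setOf_mv_eq_le {p n : ℕ} (C : Matrix (Fin p) (Fin n) ℝ)
    {y : EuclideanSpace ℝ (Fin p)} (hy : ∃ z, mv C z = y) :
    ∃ c, ∀ x, infDist x {z | mv C z = y} ≤ c * ‖mv C x - y‖ := by
  obtain ⟨z₀, rfl⟩ := hy
  obtain ⟨P, c, -, hPker, hP⟩ := (toEuclideanLin C).exists_projection_ker
  refine ⟨c, fun x => ?_⟩
  have hz : z₀ + P (x - z₀) ∈ {z | mv C z = mv C z₀} := by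
    simp [mv, hPker]
  calc infDist x _ ≤ dist x (z₀ + P (x - z₀)) := infDist_le_dist_of_mem hz
    _ = ‖(x - z₀) - P (x - z₀)‖ := by rw [dist_eq_norm]; congr 1; abel
    _ ≤ c * ‖mv C x - mv C z₀‖ := by simpa [mv] using hP (x - z₀)

lemma IsCompact.exists_le_mul_of_forall_eq_zero {X : Type*} [TopologicalSpace X] {K : Set X}
    (hK : IsCompact K) {f g : X → ℝ} (hf : BddAbove (f '' K)) (hg : ContinuousOn g K)
    (hg₀ : ∀ x, 0 ≤ g x)
    (hzero : ∀ q ∈ K, g q = 0 → ∃ c, 0 ≤ c ∧ ∀ᶠ x in 𝓝[K] q, f x ≤ c * g x) :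
    ∃ c, 0 ≤ c ∧ ∀ x ∈ K, f x ≤ c * g x := by
  obtain ⟨D, hD⟩ := hf
  refine hK.induction_on (p := fun s => ∃ c, 0 ≤ c ∧ ∀ x ∈ s, f x ≤ c * g x)
    ⟨0, le_rfl, by simp⟩ ?_ ?_ ?_
  · rintro s t hst ⟨c, hc, h⟩
    exact ⟨c, hc, fun x hx => h x (hst hx)⟩
  · rintro s t ⟨c, hc, hs⟩ ⟨d, -, ht⟩
    refine ⟨max c d, le_max_of_le_left hc, ?_⟩
    rintro x (hx | hx)
    · exact (hs x hx).trans (mul_le_mul_of_nonneg_right (le_max_left c d) (hg₀ x))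
    · exact (ht x hx).trans (mul_le_mul_of_nonneg_right (le_max_right c d) (hg₀ x))
  · intro q hq
    rcases (hg₀ q).eq_or_lt with hq₀ | hq₀
    · obtain ⟨c, hc, hev⟩ := hzero q hq hq₀.symm
      exact ⟨_, hev, c, hc, fun x hx => hx⟩
    -- away from the zeros of `g`, the bound `f ≤ D` suffices
    refine ⟨{x | g q / 2 < g x} ∩ K,
      inter_mem ((hg q hq).eventually (lt_mem_nhds (half_lt_self hq₀))) self_mem_nhdsWithin,
      max D 0 / (g q / 2), by positivity, ?_⟩
    rintro x ⟨hx, hxK⟩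
    calc f x ≤ max D 0 := (hD (mem_image_of_mem f hxK)).trans (le_max_left _ _)
      _ = max D 0 / (g q / 2) * (g q / 2) := by field_simp
      _ ≤ max D 0 / (g q / 2) * g x := by gcongr; exact hx.le

section ErrorBound

variable {E F G : Type*} [NormedAddCommGroup E] [NormedSpace ℝ E]
  [NormedAddCommGroup F] [NormedSpace ℝ F] [FiniteDimensional ℝ F]
  [NormedAddCommGroup G] [NormedSpace ℝ G]
  {X : Set E} {Φ : E → F} {Ψ : F → E}

lemma eventually_infDist_le_mul_norm (A : F →ₗ[ℝ] G) {q : E}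
    (hΦ : ContinuousWithinAt Φ X q) (hΦX : Φ '' X ∈ 𝓝 (Φ q)) (hΨΦ : ∀ p ∈ X, Ψ (Φ p) = p)
    (hΨ : ContDiffAt ℝ 1 Ψ (Φ q)) (hq : A (Φ q) = 0) :
    ∃ c, 0 ≤ c ∧ ∀ᶠ x in 𝓝[X] q, infDist x {p ∈ X | A (Φ p) = 0} ≤ c * ‖A (Φ x)‖ := by
  obtain ⟨P, c, hc, hPker, hP⟩ := A.exists_projection_ker
  obtain ⟨L, t, ht, hLip⟩ := hΨ.exists_lipschitzOnWith
  have hPq : P (Φ q) = Φ q := by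
    have h := hP (Φ q)
    rw [hq, norm_zero, mul_zero, norm_le_zero_iff, sub_eq_zero] at h
    exact h.symm
  have hP_tendsto : Tendsto P (𝓝 (Φ q)) (𝓝 (Φ q)) := by
    simpa only [hPq] using P.continuous.tendsto (Φ q)
  have hnear : t ∩ P ⁻¹' (t ∩ Φ '' X) ∈ 𝓝 (Φ q) := inter_mem ht (hP_tendsto (inter_mem ht hΦX))
  refine ⟨L * c, by positivity, ?_⟩
  filter_upwards [hΦ hnear, self_mem_nhdsWithin]
    with x ⟨hxt, hPt, p, hpX, hp⟩ hxX
  have hpT : p ∈ {p ∈ X | A (Φ p) = 0} := ⟨hpX, by rw [hp, hPker]⟩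
  calc infDist x _ ≤ dist x p := infDist_le_dist_of_mem hpT
    _ = dist (Ψ (Φ x)) (Ψ (P (Φ x))) := by rw [hΨΦ x hxX, ← hp, hΨΦ p hpX]
    _ ≤ L * dist (Φ x) (P (Φ x)) := hLip.dist_le_mul _ hxt _ hPt
    _ ≤ L * (c * ‖A (Φ x)‖) := by rw [dist_eq_norm]; gcongr; exact hP _
    _ = L * c * ‖A (Φ x)‖ := by ring

lemma IsCompact.exists_infDist_le_mul_norm {K : Set E} (hK : IsCompact K) (hKX : K ⊆ X)
    (hΦ : ContinuousOn Φ X) (hY : IsOpen (Φ '' X)) (hΨΦ : ∀ p ∈ X, Ψ (Φ p) = p)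
    (hΨ : ContDiffOn ℝ 1 Ψ (Φ '' X)) (A : F →ₗ[ℝ] G) :
    ∃ c, 0 ≤ c ∧ ∀ x ∈ K, infDist x {p ∈ X | A (Φ p) = 0} ≤ c * ‖A (Φ x)‖ := by
  refine hK.exists_le_mul_of_forall_eq_zero
    (hK.bddAbove_image (continuous_infDist_pt _).continuousOn)
    (A.continuous_of_finiteDimensional.comp_continuousOn (hΦ.mono hKX)).norm
    (fun _ => norm_nonneg _) fun q hq hq₀ => ?_
  have hΦq : Φ '' X ∈ 𝓝 (Φ q) := hY.mem_nhds ⟨q, hKX hq, rfl⟩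
  obtain ⟨c, hc, hev⟩ := eventually_infDist_le_mul_norm A (hΦ q (hKX hq)) hΦq hΨΦ
    (hΨ.contDiffAt hΦq) (norm_eq_zero.1 hq₀)
  exact ⟨c, hc, nhdsWithin_mono _ hKX hev⟩

end ErrorBound

theorem IsCompact.exists_pos_forall_le {ι X : Type*} [Finite ι] [TopologicalSpace X]
    {K : Set X} (hK : IsCompact K) {f : ι → X → ℝ} (hf : ∀ i, ContinuousOn (f i) K)
    (hpos : ∀ i, ∀ x ∈ K, 0 < f i x) : ∃ ε, 0 < ε ∧ ∀ i, ∀ x ∈ K, ε ≤ f i x := by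
  have h : ∀ i, ∀ᶠ ε in 𝓝[>] (0 : ℝ), ∀ x ∈ K, ε ≤ f i x := fun i => by
    obtain ⟨ε, hε, hεf⟩ := hK.exists_forall_le' (hf i) (hpos i)
    filter_upwards [Ioo_mem_nhdsGT hε] with δ hδ x hx using hδ.2.le.trans (hεf x hx)
  obtain ⟨ε, hεf, hε⟩ := ((eventually_all.2 h).and self_mem_nhdsWithin).exists
  exact ⟨ε, hε, hεf⟩

section Thermodynamics

variable {n N : ℕ}

noncomputable def brkMap (J : Fin N → Matrix (Fin n) (Fin n) ℝ) (e : EuclideanSpace ℝ (Fin n)) :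
    EuclideanSpace ℝ (Fin n) →ₗ[ℝ] EuclideanSpace ℝ (Fin N) :=
  (WithLp.linearEquiv 2 ℝ (Fin N → ℝ)).symm.toLinearMap ∘ₗ
    LinearMap.pi fun k => innerₛₗ ℝ e ∘ₗ toEuclideanLin (J k)

@[simp] lemma brkMap_apply (J : Fin N → Matrix (Fin n) (Fin n) ℝ)
    (e y : EuclideanSpace ℝ (Fin n)) (k : Fin N) : brkMap J e y k = brk (J k) e y :=
  rfl

lemma norm_brkMap_sq (J : Fin N → Matrix (Fin n) (Fin n) ℝ) (e y : EuclideanSpace ℝ (Fin n)) :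
    ‖brkMap J e y‖ ^ 2 = ∑ k, brk (J k) e y ^ 2 := by
  simp [EuclideanSpace.norm_sq_eq]

lemma brkMap_eq_zero_iff (J : Fin N → Matrix (Fin n) (Fin n) ℝ)
    (e y : EuclideanSpace ℝ (Fin n)) : brkMap J e y = 0 ↔ ∀ k, brk (J k) e y = 0 := by
  simp [PiLp.ext_iff]

lemma IsCompact.exists_infDist_equilibria_sq_le {X K : Set (EuclideanSpace ℝ (Fin n))}
    (hK : IsCompact K) (hKX : K ⊆ X)
    {Hx Hinv : EuclideanSpace ℝ (Fin n) → EuclideanSpace ℝ (Fin n)} (hHx : ContinuousOn Hx X)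
    (hY : IsOpen (Hx '' X)) (hHinv : ∀ p ∈ X, Hinv (Hx p) = p)
    (hHinvC1 : ContDiffOn ℝ 1 Hinv (Hx '' X)) (J : Fin N → Matrix (Fin n) (Fin n) ℝ)
    (e : EuclideanSpace ℝ (Fin n)) :
    ∃ c, 0 ≤ c ∧ ∀ x ∈ K,
      infDist x {p ∈ X | ∀ k, brk (J k) e (Hx p) = 0} ^ 2 ≤ c * ∑ k, brk (J k) e (Hx x) ^ 2 := by
  obtain ⟨c, hc, hbound⟩ := hK.exists_infDist_le_mul_norm hKX hHx hY hHinv hHinvC1 (brkMap J e)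
  refine ⟨c ^ 2, sq_nonneg c, fun x hx => ?_⟩
  simp_rw [← brkMap_eq_zero_iff, ← norm_brkMap_sq, ← mul_pow]
  exact pow_le_pow_left₀ infDist_nonneg (hbound x hx) 2

noncomputable def entropyProduction (J : Fin N → Matrix (Fin n) (Fin n) ℝ)
    (γ : Fin N → EuclideanSpace ℝ (Fin n) → ℝ) (e : EuclideanSpace ℝ (Fin n))
    (Hx : EuclideanSpace ℝ (Fin n) → EuclideanSpace ℝ (Fin n)) (p : EuclideanSpace ℝ (Fin n)) :
    ℝ :=
  ∑ k, γ k p * brk (J k) e (Hx p) ^ 2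

lemma continuousOn_entropyProduction {X : Set (EuclideanSpace ℝ (Fin n))}
    {J : Fin N → Matrix (Fin n) (Fin n) ℝ} {γ : Fin N → EuclideanSpace ℝ (Fin n) → ℝ}
    {e : EuclideanSpace ℝ (Fin n)} {Hx : EuclideanSpace ℝ (Fin n) → EuclideanSpace ℝ (Fin n)}
    (hγ : ∀ k, ContinuousOn (γ k) X) (hHx : ContinuousOn Hx X) :
    ContinuousOn (entropyProduction J γ e Hx) X :=
  continuousOn_finsetSum _ fun k _ => (hγ k).mul
    ((continuousOn_const.inner (continuousOn_const.mv hHx)).pow 2)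

lemma IsCompact.exists_sq_infDist_add_sq_infDist_le {p : ℕ}
    {X K : Set (EuclideanSpace ℝ (Fin n))} (hK : IsCompact K) (hKX : K ⊆ X)
    {Hx Hinv : EuclideanSpace ℝ (Fin n) → EuclideanSpace ℝ (Fin n)} (hHx : ContinuousOn Hx X)
    (hY : IsOpen (Hx '' X)) (hHinv : ∀ p ∈ X, Hinv (Hx p) = p)
    (hHinvC1 : ContDiffOn ℝ 1 Hinv (Hx '' X)) (J : Fin N → Matrix (Fin n) (Fin n) ℝ)
    (e : EuclideanSpace ℝ (Fin n)) {γ : Fin N → EuclideanSpace ℝ (Fin n) → ℝ}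
    (hγpos : ∀ k, ∀ p ∈ X, 0 < γ k p) (hγ : ∀ k, ContinuousOn (γ k) X)
    (C : Matrix (Fin p) (Fin n) ℝ) {yref : EuclideanSpace ℝ (Fin p)} (hyref : ∃ z, mv C z = yref)
    {b : ℝ} (hb : 0 < b) :
    ∃ κ, 0 ≤ κ ∧ ∀ x ∈ K,
      infDist x {z | mv C z = yref} ^ 2 + infDist x {p ∈ X | ∀ k, brk (J k) e (Hx p) = 0} ^ 2
        ≤ κ * (‖mv C x - yref‖ ^ 2 + b * entropyProduction J γ e Hx x) := by
  obtain ⟨c₁, hc₁⟩ := exists_infDist_setOf_mv_eq_le C hyref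
  obtain ⟨c₂, hc₂, hc₂K⟩ := hK.exists_infDist_equilibria_sq_le hKX hHx hY hHinv hHinvC1 J e
  obtain ⟨γ₀, hγ₀, hγ₀K⟩ :=
    hK.exists_pos_forall_le (fun k => (hγ k).mono hKX) fun k p hp => hγpos k p (hKX hp)
  set κ := max (c₁ ^ 2) (c₂ / (γ₀ * b))
  refine ⟨κ, le_max_of_le_left (sq_nonneg _), fun x hx => ?_⟩
  set s := ∑ k, brk (J k) e (Hx x) ^ 2
  have hs : γ₀ * s ≤ entropyProduction J γ e Hx x := by
    rw [Finset.mul_sum]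
    exact Finset.sum_le_sum fun k _ => mul_le_mul_of_nonneg_right (hγ₀K k x hx) (sq_nonneg _)
  have hσ : 0 ≤ entropyProduction J γ e Hx x :=
    (mul_nonneg hγ₀.le (Finset.sum_nonneg fun k _ => sq_nonneg _)).trans hs
  have h₁ : infDist x {z | mv C z = yref} ^ 2 ≤ c₁ ^ 2 * ‖mv C x - yref‖ ^ 2 := by
    rw [← mul_pow]
    exact pow_le_pow_left₀ infDist_nonneg (hc₁ x) 2
  have h₂ : c₂ * s ≤ c₂ / (γ₀ * b) * (b * entropyProduction J γ e Hx x) := by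
    rw [show c₂ / (γ₀ * b) * (b * entropyProduction J γ e Hx x)
      = c₂ * (entropyProduction J γ e Hx x / γ₀) by field_simp]
    gcongr
    rw [le_div_iff₀ hγ₀]
    linarith
  calc _ ≤ c₁ ^ 2 * ‖mv C x - yref‖ ^ 2 + c₂ * s := add_le_add h₁ (hc₂K x hx)
    _ ≤ κ * ‖mv C x - yref‖ ^ 2 + κ * (b * entropyProduction J γ e Hx x) :=
      add_le_add (mul_le_mul_of_nonneg_right (le_max_left _ _) (sq_nonneg _))
        (h₂.trans (mul_le_mul_of_nonneg_right (le_max_right _ _) (by positivity)))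
    _ = κ * (‖mv C x - yref‖ ^ 2 + b * entropyProduction J γ e Hx x) := by ring

end Thermodynamics

section Balance

variable {n N m : ℕ} {J0 : Matrix (Fin n) (Fin n) ℝ} {J : Fin N → Matrix (Fin n) (Fin n) ℝ}

lemma energy_balance (hJ0 : J0ᵀ = -J0) (hJ : ∀ k, (J k)ᵀ = -J k) (c : Fin N → ℝ)
    (G : Matrix (Fin n) (Fin m) ℝ) (y : EuclideanSpace ℝ (Fin n)) (v : EuclideanSpace ℝ (Fin m)) :
    inner ℝ y (mv (J0 + ∑ k, c k • J k) y + mv G v) = inner ℝ (mv Gᵀ y) v := by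
  simp [inner_add_right, inner_sum, inner_smul_right, inner_mv_self_of_transpose_eq_neg hJ0,
    inner_mv_self_of_transpose_eq_neg (hJ _), inner_mv_right G]

lemma entropy_balance {e : EuclideanSpace ℝ (Fin n)} (hJ0 : J0ᵀ = -J0) (hCas : mv J0 e = 0)
    (c : Fin N → ℝ) (G : Matrix (Fin n) (Fin m) ℝ) (y : EuclideanSpace ℝ (Fin n))
    (v : EuclideanSpace ℝ (Fin m)) :
    inner ℝ e (mv (J0 + ∑ k, c k • J k) y + mv G v)
      = ∑ k, c k * brk (J k) e y + inner ℝ (mv Gᵀ e) v := by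
  have hJ0e : inner ℝ e (mv J0 y) = 0 := by rw [inner_mv_right, hJ0, mv_neg, hCas]; simp
  simp [inner_add_right, inner_sum, inner_smul_right, hJ0e, inner_mv_right G, brk]

end Balance

section Trajectory

variable {n N m : ℕ} {X : Set (EuclideanSpace ℝ (Fin n))} {H S : EuclideanSpace ℝ (Fin n) → ℝ}
  {Hx : EuclideanSpace ℝ (Fin n) → EuclideanSpace ℝ (Fin n)} {e : EuclideanSpace ℝ (Fin n)}
  {J0 : EuclideanSpace ℝ (Fin n) → Matrix (Fin n) (Fin n) ℝ} {J : Fin N → Matrix (Fin n) (Fin n) ℝ}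
  {γ : Fin N → EuclideanSpace ℝ (Fin n) → ℝ}
  {g : EuclideanSpace ℝ (Fin n) → Matrix (Fin n) (Fin m) ℝ}

lemma hasDerivWithinAt_energy_sub_entropy (a b : ℝ) {x : ℝ → EuclideanSpace ℝ (Fin n)}
    {x' : EuclideanSpace ℝ (Fin n)} {v : EuclideanSpace ℝ (Fin m)} {s : Set ℝ} {t : ℝ}
    (hH : HasGradientAt H (Hx (x t)) (x t)) (hS : ∀ p, S p = inner ℝ e p)
    (hJ0 : (J0 (x t))ᵀ = -J0 (x t)) (hCas : mv (J0 (x t)) e = 0) (hJ : ∀ k, (J k)ᵀ = -J k)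
    (hx : HasDerivWithinAt x x' s t)
    (hdyn : x' = mv (J0 (x t) + ∑ k, (γ k (x t) * brk (J k) e (Hx (x t))) • J k) (Hx (x t))
      + mv (g (x t)) v) :
    HasDerivWithinAt (fun τ => a * H (x τ) - b * S (x τ))
      (inner ℝ (a • mv (g (x t))ᵀ (Hx (x t)) - b • mv (g (x t))ᵀ e) v
        - b * entropyProduction J γ e Hx (x t)) s t := by
  have hHd : HasDerivWithinAt (fun τ => H (x τ)) (inner ℝ (Hx (x t)) x') s t := by
    have h := hH.hasFDerivAt.comp_hasDerivWithinAt t hx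
    simp only [Function.comp_def, InnerProductSpace.toDual_apply_apply] at h
    exact h
  have hSd : HasDerivWithinAt (fun τ => S (x τ)) (inner ℝ e x') s t := by
    simpa only [hS, inner_zero_left, add_zero] using (hasDerivWithinAt_const t s e).inner ℝ hx
  refine ((hHd.const_mul a).sub (hSd.const_mul b)).congr_deriv ?_
  rw [hdyn, energy_balance hJ0 hJ, entropy_balance hJ0 hCas, inner_sub_left,
    real_inner_smul_left, real_inner_smul_left, entropyProduction]
  simp only [sq, mul_assoc]
  ring

lemma integral_add_supply_eq (a b : ℝ) {tf : ℝ} (htf : 0 ≤ tf) {r : ℝ → ℝ}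
    {x x' : ℝ → EuclideanSpace ℝ (Fin n)} {u : ℝ → EuclideanSpace ℝ (Fin m)}
    (hH : ∀ p ∈ X, HasGradientAt H (Hx p) p) (hHx : ContinuousOn Hx X)
    (hS : ∀ p, S p = inner ℝ e p) (hJ0 : ∀ p ∈ X, (J0 p)ᵀ = -J0 p)
    (hCas : ∀ p ∈ X, mv (J0 p) e = 0) (hJ : ∀ k, (J k)ᵀ = -J k)
    (hγ : ∀ k, ContinuousOn (γ k) X) (hg : ContinuousOn g X)
    (hr : IntervalIntegrable r MeasureTheory.volume 0 tf) (hu : ContinuousOn u (Icc 0 tf))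
    (hxX : ∀ t ∈ Icc 0 tf, x t ∈ X) (hx : ∀ t ∈ Icc 0 tf, HasDerivWithinAt x (x' t) (Icc 0 tf) t)
    (hdyn : ∀ t ∈ Icc 0 tf, x' t =
      mv (J0 (x t) + ∑ k, (γ k (x t) * brk (J k) e (Hx (x t))) • J k) (Hx (x t))
        + mv (g (x t)) (u t)) :
    ∫ t in (0 : ℝ)..tf,
        (r t + inner ℝ (a • mv (g (x t))ᵀ (Hx (x t)) - b • mv (g (x t))ᵀ e) (u t))
      = (∫ t in (0 : ℝ)..tf, (r t + b * entropyProduction J γ e Hx (x t)))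
        + ((a * H (x tf) - b * S (x tf)) - (a * H (x 0) - b * S (x 0))) := by
  have hxc : ContinuousOn x (Icc 0 tf) := fun t ht => (hx t ht).continuousWithinAt
  have hσ : ContinuousOn (fun t => entropyProduction J γ e Hx (x t)) (Icc 0 tf) :=
    (continuousOn_entropyProduction hγ hHx).comp hxc hxX
  have hgT : ContinuousOn (fun t => (g (x t))ᵀ) (Icc 0 tf) :=
    continuous_id.matrix_transpose.comp_continuousOn (hg.comp hxc hxX)
  have hsupply : ContinuousOn
      (fun t => inner ℝ (a • mv (g (x t))ᵀ (Hx (x t)) - b • mv (g (x t))ᵀ e) (u t)) (Icc 0 tf) :=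
    (((hgT.mv (hHx.comp hxc hxX)).const_smul a).sub
      ((hgT.mv continuousOn_const).const_smul b)).inner hu
  have hderiv : ∀ t ∈ Icc 0 tf, HasDerivWithinAt (fun τ => a * H (x τ) - b * S (x τ))
      (inner ℝ (a • mv (g (x t))ᵀ (Hx (x t)) - b • mv (g (x t))ᵀ e) (u t)
        - b * entropyProduction J γ e Hx (x t)) (Icc 0 tf) t := fun t ht =>
    hasDerivWithinAt_energy_sub_entropy a b (hH _ (hxX t ht)) hS (hJ0 _ (hxX t ht))
      (hCas _ (hxX t ht)) hJ (hx t ht) (hdyn t ht)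
  have hDint : IntervalIntegrable (fun t => r t + b * entropyProduction J γ e Hx (x t))
      MeasureTheory.volume 0 tf :=
    hr.add ((continuousOn_const.mul hσ).intervalIntegrable_of_Icc htf)
  have hψint : IntervalIntegrable (fun t =>
      inner ℝ (a • mv (g (x t))ᵀ (Hx (x t)) - b • mv (g (x t))ᵀ e) (u t)
        - b * entropyProduction J γ e Hx (x t)) MeasureTheory.volume 0 tf :=
    (hsupply.sub (continuousOn_const.mul hσ)).intervalIntegrable_of_Icc htf
  rw [← intervalIntegral.integral_eq_sub_of_hasDeriv_right_of_le htf
      (fun t ht => (hderiv t ht).continuousWithinAt)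
      (fun t ht => ((hderiv t (Ioo_subset_Icc_self ht)).hasDerivAt
        (Icc_mem_nhds ht.1 ht.2)).hasDerivWithinAt) hψint,
    ← intervalIntegral.integral_add hDint hψint]
  congr 1
  ext t
  ring

end Trajectory

theorem integral_turnpike_estimate_output_stabilization_general
    (n N m : ℕ)
    (X : Set (EuclideanSpace ℝ (Fin n)))
    -- H ∈ C², with gradient Hx and Hessian Hxx
    (H : EuclideanSpace ℝ (Fin n) → ℝ)
    (Hx : EuclideanSpace ℝ (Fin n) → EuclideanSpace ℝ (Fin n))
    (Hxx : EuclideanSpace ℝ (Fin n) → Matrix (Fin n) (Fin n) ℝ)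
    (hH : ∀ p ∈ X, HasGradientAt H (Hx p) p)
    (hHx : ∀ p ∈ X,
      HasFDerivAt Hx (LinearMap.toContinuousLinearMap (Matrix.toEuclideanLin (Hxx p))) p)
    -- 𝕐 = H_x(𝕏) is open and H_x : 𝕏 → 𝕐 is a C¹-diffeomorphism with inverse Hinv
    (hYopen : IsOpen (Hx '' X))
    (Hinv : EuclideanSpace ℝ (Fin n) → EuclideanSpace ℝ (Fin n))
    (hHinvleft : ∀ p ∈ X, Hinv (Hx p) = p)
    (hHinvC1 : ContDiffOn ℝ 1 Hinv (Hx '' X))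
    -- entropy S(x) = eᵀ x, e ≠ 0
    (e : EuclideanSpace ℝ (Fin n))
    (S : EuclideanSpace ℝ (Fin n) → ℝ) (hS : ∀ p, S p = (inner ℝ e p : ℝ))
    -- Poisson structure matrix field J₀, with Casimir e
    (J0 : EuclideanSpace ℝ (Fin n) → Matrix (Fin n) (Fin n) ℝ)
    (hJ0skew : ∀ p ∈ X, (J0 p)ᵀ = -(J0 p))
    (hCasimir : ∀ p ∈ X, mv (J0 p) e = 0)
    -- skew-symmetric structure matrices and positive continuous γ_k
    (J : Fin N → Matrix (Fin n) (Fin n) ℝ)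
    (hJskew : ∀ k, (J k)ᵀ = -(J k))
    (γ : Fin N → EuclideanSpace ℝ (Fin n) → ℝ)
    (hγpos : ∀ k, ∀ p ∈ X, 0 < γ k p)
    (hγcont : ∀ k, ContinuousOn (γ k) X)
    -- continuous input matrix
    (g : EuclideanSpace ℝ (Fin n) → Matrix (Fin n) (Fin m) ℝ)
    (hgcont : ContinuousOn g X)
    -- the set of thermodynamic equilibria
    (T : Set (EuclideanSpace ℝ (Fin n)))
    (hT : T = {p ∈ X | ∀ k, brk (J k) e (Hx p) = 0})
    -- output matrix and reference in its range
    (p : ℕ) (C : Matrix (Fin p) (Fin n) ℝ)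
    (yref : EuclideanSpace ℝ (Fin p)) (hyref : ∃ z, mv C z = yref)
    -- compact set, cost coefficients and cost bound
    (K : Set (EuclideanSpace ℝ (Fin n))) (hK : IsCompact K) (hKX : K ⊆ X)
    (α₁ α₂ T₀ : ℝ) (hα₂ : 0 < α₂) (hT₀ : 0 < T₀)
    (C₂ : ℝ) :
    ∃ C₃ : ℝ, 0 ≤ C₃ ∧
      ∀ (tf : ℝ), 0 < tf →
      ∀ (x : ℝ → EuclideanSpace ℝ (Fin n)) (u : ℝ → EuclideanSpace ℝ (Fin m))
        (x' : ℝ → EuclideanSpace ℝ (Fin n)),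
        ContinuousOn u (Icc 0 tf) →
        (∀ t ∈ Icc 0 tf, x t ∈ K) →
        ContinuousOn x' (Icc 0 tf) →
        (∀ t ∈ Icc 0 tf, HasDerivWithinAt x (x' t) (Icc 0 tf) t) →
        (∀ t ∈ Icc 0 tf,
          x' t =
            mv (J0 (x t) + ∑ k, (γ k (x t) * brk (J k) e (Hx (x t))) • J k) (Hx (x t))
              + mv (g (x t)) (u t)) →
        (∫ t in (0:ℝ)..tf,
            (‖mv C (x t) - yref‖ ^ 2
              + (inner ℝ (α₁ • mv (g (x t))ᵀ (Hx (x t)) - (α₂ * T₀) • mv (g (x t))ᵀ e)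
                  (u t) : ℝ))) ≤ C₂ →
        (∫ t in (0:ℝ)..tf,
            (infDist (x t) {z : EuclideanSpace ℝ (Fin n) | mv C z = yref} ^ 2
              + infDist (x t) T ^ 2)) ≤ C₃ := by
  subst hT
  have hHc : ContinuousOn Hx X := fun p hp => (hHx p hp).continuousAt.continuousWithinAt
  obtain ⟨κ, hκ, hκK⟩ := hK.exists_sq_infDist_add_sq_infDist_le hKX hHc hYopen hHinvleft
    hHinvC1 J e hγpos hγcont C hyref (mul_pos hα₂ hT₀)
  have hψ : ContinuousOn (fun p => α₁ * H p - α₂ * T₀ * S p) K :=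
    (continuousOn_const.mul fun p hp => (hH p (hKX hp)).continuousAt.continuousWithinAt).sub
      (continuousOn_const.mul ((continuous_congr hS).2 (by fun_prop)).continuousOn)
  obtain ⟨M, hM⟩ := hK.exists_bound_of_continuousOn hψ
  refine ⟨κ * max (C₂ + 2 * M) 0, by positivity, ?_⟩
  intro tf htf x u x' hu hxK _ hx hdyn hcost
  have hxX : ∀ t ∈ Icc 0 tf, x t ∈ X := fun t ht => hKX (hxK t ht)
  have hxc : ContinuousOn x (Icc 0 tf) := fun t ht => (hx t ht).continuousWithinAt
  have hq : ContinuousOn (fun t => ‖mv C (x t) - yref‖ ^ 2) (Icc 0 tf) :=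
    ((continuousOn_const.mv hxc).sub continuousOn_const).norm.pow 2
  rw [integral_add_supply_eq α₁ (α₂ * T₀) htf.le hH hHc hS hJ0skew hCasimir hJskew hγcont hgcont
    (hq.intervalIntegrable_of_Icc htf.le) hu hxX hx hdyn] at hcost
  have hdist := fun s : Set (EuclideanSpace ℝ (Fin n)) =>
    ((continuous_infDist_pt s).comp_continuousOn hxc).pow 2
  have hσ := (continuousOn_entropyProduction (e := e) (J := J) hγcont hHc).comp hxc hxX
  calc _ ≤ ∫ t in (0:ℝ)..tf,
        κ * (‖mv C (x t) - yref‖ ^ 2 + α₂ * T₀ * entropyProduction J γ e Hx (x t)) :=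
      intervalIntegral.integral_mono_on htf.le
        (((hdist _).add (hdist _)).intervalIntegrable_of_Icc htf.le)
        ((continuousOn_const.mul (hq.add (continuousOn_const.mul hσ))).intervalIntegrable_of_Icc
          htf.le) fun t ht => hκK (x t) (hxK t ht)
    _ ≤ κ * max (C₂ + 2 * M) 0 := by
      rw [intervalIntegral.integral_const_mul]
      gcongr
      exact le_max_of_le_left (by linarith [(abs_le.1 (hM _ (hxK tf ⟨htf.le, le_rfl⟩))).1,
        (abs_le.1 (hM _ (hxK 0 ⟨le_rfl, htf.le⟩))).2])

/-- Integral turnpike estimate for output stabilization: with output matrix `C`,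
reference `y_ref ∈ im C`, compact `K ⊆ 𝕏` and cost bound `C₂`, there is `C₃ ≥ 0`
independent of the horizon such that every solution of the RIPHS staying in `K` whose
stage cost `ℓ̃(x,u) = ‖Cx − y_ref‖² + (α₁y_H − α₂T₀y_S)ᵀu` integrates to at most `C₂`
satisfies `∫₀^{t_f} [dist(x(t), C⁻¹{y_ref})² + dist(x(t),𝒯)²] dt ≤ C₃`. -/
theorem integral_turnpike_estimate_output_stabilization
    (n N m : ℕ)
    (X : Set (EuclideanSpace ℝ (Fin n))) (hXopen : IsOpen X)
    -- H ∈ C², with gradient Hx and Hessian Hxx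
    (H : EuclideanSpace ℝ (Fin n) → ℝ)
    (Hx : EuclideanSpace ℝ (Fin n) → EuclideanSpace ℝ (Fin n))
    (Hxx : EuclideanSpace ℝ (Fin n) → Matrix (Fin n) (Fin n) ℝ)
    (hH : ∀ p ∈ X, HasGradientAt H (Hx p) p)
    (hHx : ∀ p ∈ X,
      HasFDerivAt Hx (LinearMap.toContinuousLinearMap (Matrix.toEuclideanLin (Hxx p))) p)
    (hHxxcont : ContinuousOn Hxx X)
    -- 𝕐 = H_x(𝕏) is open and H_x : 𝕏 → 𝕐 is a C¹-diffeomorphism with inverse Hinv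
    (hYopen : IsOpen (Hx '' X))
    (Hinv : EuclideanSpace ℝ (Fin n) → EuclideanSpace ℝ (Fin n))
    (hHinvmaps : ∀ y ∈ Hx '' X, Hinv y ∈ X)
    (hHinvleft : ∀ p ∈ X, Hinv (Hx p) = p)
    (hHinvC1 : ContDiffOn ℝ 1 Hinv (Hx '' X))
    -- entropy S(x) = eᵀ x, e ≠ 0
    (e : EuclideanSpace ℝ (Fin n)) (he : e ≠ 0)
    (S : EuclideanSpace ℝ (Fin n) → ℝ) (hS : ∀ p, S p = (inner ℝ e p : ℝ))
    -- Poisson structure matrix field J₀, with Casimir e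
    (J0 : EuclideanSpace ℝ (Fin n) → Matrix (Fin n) (Fin n) ℝ)
    (hJ0cont : ContinuousOn J0 X)
    (hJ0skew : ∀ p ∈ X, (J0 p)ᵀ = -(J0 p))
    (hCasimir : ∀ p ∈ X, mv (J0 p) e = 0)
    -- skew-symmetric structure matrices and positive continuous γ_k
    (J : Fin N → Matrix (Fin n) (Fin n) ℝ)
    (hJskew : ∀ k, (J k)ᵀ = -(J k))
    (γ : Fin N → EuclideanSpace ℝ (Fin n) → ℝ)
    (hγpos : ∀ k, ∀ p ∈ X, 0 < γ k p)
    (hγcont : ∀ k, ContinuousOn (γ k) X)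
    -- continuous input matrix
    (g : EuclideanSpace ℝ (Fin n) → Matrix (Fin n) (Fin m) ℝ)
    (hgcont : ContinuousOn g X)
    -- V = ⋂_k (J_k e)^⊥ meets 𝕐
    (hVY : ({y : EuclideanSpace ℝ (Fin n) | ∀ k, (inner ℝ y (mv (J k) e) : ℝ) = 0}
        ∩ (Hx '' X)).Nonempty)
    -- the set of thermodynamic equilibria
    (T : Set (EuclideanSpace ℝ (Fin n)))
    (hT : T = {p ∈ X | ∀ k, brk (J k) e (Hx p) = 0})
    -- output matrix and reference in its range
    (p : ℕ) (C : Matrix (Fin p) (Fin n) ℝ)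
    (yref : EuclideanSpace ℝ (Fin p)) (hyref : ∃ z, mv C z = yref)
    -- compact set, cost coefficients and cost bound
    (K : Set (EuclideanSpace ℝ (Fin n))) (hK : IsCompact K) (hKX : K ⊆ X)
    (α₁ α₂ T₀ : ℝ) (hα₁ : 0 < α₁) (hα₂ : 0 < α₂) (hT₀ : 0 < T₀)
    (C₂ : ℝ) (hC₂ : 0 ≤ C₂) :
    ∃ C₃ : ℝ, 0 ≤ C₃ ∧
      ∀ (tf : ℝ), 0 < tf →
      ∀ (x : ℝ → EuclideanSpace ℝ (Fin n)) (u : ℝ → EuclideanSpace ℝ (Fin m))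
        (x' : ℝ → EuclideanSpace ℝ (Fin n)),
        ContinuousOn u (Icc 0 tf) →
        (∀ t ∈ Icc 0 tf, x t ∈ K) →
        ContinuousOn x' (Icc 0 tf) →
        (∀ t ∈ Icc 0 tf, HasDerivWithinAt x (x' t) (Icc 0 tf) t) →
        (∀ t ∈ Icc 0 tf,
          x' t =
            mv (J0 (x t) + ∑ k, (γ k (x t) * brk (J k) e (Hx (x t))) • J k) (Hx (x t))
              + mv (g (x t)) (u t)) →
        (∫ t in (0:ℝ)..tf,
            (‖mv C (x t) - yref‖ ^ 2
              + (inner ℝ (α₁ • mv (g (x t))ᵀ (Hx (x t)) - (α₂ * T₀) • mv (g (x t))ᵀ e)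
                  (u t) : ℝ))) ≤ C₂ →
        (∫ t in (0:ℝ)..tf,
            (infDist (x t) {z : EuclideanSpace ℝ (Fin n) | mv C z = yref} ^ 2
              + infDist (x t) T ^ 2)) ≤ C₃ :=
  integral_turnpike_estimate_output_stabilization_general n N m X H Hx Hxx hH hHx hYopen Hinv
    hHinvleft hHinvC1 e S hS J0 hJ0skew hCasimir J hJskew γ hγpos hγcont g hgcont T hT p C yref
    hyref K hK hKX α₁ α₂ T₀ hα₂ hT₀ C₂
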